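/- Under the hypotheses of the main lemma (T = g(W), x̃ = h(W), I[T;x̃]=0, ρ = I[T;W]/H[W], H[W]>0), for the token W_i (a function of W) it holds that I[W_i; x̃] ≤ (1 - ρ)·H[W]. -/
import Mathlib


open Real

variable {Ω : Type*} [Fintype Ω]

/-- Distribution (probability mass) of a random variable `X` under weights `p`. -/
noncomputable def rvDist {α : Type*} [Fintype α] [DecidableEq α]
    (p : Ω → ℝ) (X : Ω → α) (x : α) : ℝ :=
  ∑ ω ∈ Finset.univ.filter (fun ω => X ω = x), p ω

/-- The joint random variable `(X, Y)`. -/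
def jointRV {α β : Type*} (X : Ω → α) (Y : Ω → β) : Ω → α × β :=
  fun ω => (X ω, Y ω)

/-- Shannon entropy `H[X] = -∑ₓ p(x) log p(x)`. -/
noncomputable def entropy {α : Type*} [Fintype α] [DecidableEq α]
    (p : Ω → ℝ) (X : Ω → α) : ℝ :=
  ∑ x, Real.negMulLog (rvDist p X x)

/-- Conditional entropy `H[Y ∣ X] = -∑_{x,y} p(x,y) log p(y ∣ x)`. -/
noncomputable def condEntropy {α β : Type*} [Fintype α] [DecidableEq α]
    [Fintype β] [DecidableEq β] (p : Ω → ℝ) (X : Ω → α) (Y : Ω → β) : ℝ :=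
  -∑ x, ∑ y, rvDist p (jointRV X Y) (x, y) *
      Real.log (rvDist p (jointRV X Y) (x, y) / rvDist p X x)

/-- Mutual information `I[X;Y] = ∑_{x,y} p(x,y) log (p(x,y)/(p(x)p(y)))`. -/
noncomputable def mutualInfo {α β : Type*} [Fintype α] [DecidableEq α]
    [Fintype β] [DecidableEq β] (p : Ω → ℝ) (X : Ω → α) (Y : Ω → β) : ℝ :=
  ∑ x, ∑ y, rvDist p (jointRV X Y) (x, y) *
      Real.log (rvDist p (jointRV X Y) (x, y) / (rvDist p X x * rvDist p Y y))

/-- `p` is a probability mass function on the finite sample space `Ω`. -/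
def IsProbMass (p : Ω → ℝ) : Prop :=
  (∀ ω, 0 ≤ p ω) ∧ ∑ ω, p ω = 1

/-- Independence of two finitely-valued random variables. -/
def Indep {α β : Type*} [Fintype α] [DecidableEq α] [Fintype β] [DecidableEq β]
    (p : Ω → ℝ) (X : Ω → α) (Y : Ω → β) : Prop :=
  ∀ x y, rvDist p (jointRV X Y) (x, y) = rvDist p X x * rvDist p Y y

section Helpers

variable {α β γ : Type*} [Fintype α] [DecidableEq α] [Fintype β] [DecidableEq β]
  [Fintype γ] [DecidableEq γ]

lemma rvDist_nonneg (p : Ω → ℝ) (hp : ∀ ω, 0 ≤ p ω) (X : Ω → α) (x : α) :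
    0 ≤ rvDist p X x :=
  Finset.sum_nonneg fun ω _ => hp ω

lemma rvDist_joint_eq (p : Ω → ℝ) (X : Ω → α) (Y : Ω → β) (x : α) (y : β) :
    rvDist p (jointRV X Y) (x, y) =
      ∑ ω ∈ (Finset.univ.filter (fun ω => X ω = x)).filter (fun ω => Y ω = y), p ω := by
  unfold rvDist
  rw [Finset.filter_filter]
  congr 1
  apply Finset.filter_congr
  intro ω _
  simp [jointRV, Prod.ext_iff]

lemma sum_joint_snd (p : Ω → ℝ) (X : Ω → α) (Y : Ω → β) (x : α) :
    ∑ y, rvDist p (jointRV X Y) (x, y) = rvDist p X x := by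
  simp_rw [rvDist_joint_eq]
  unfold rvDist
  exact Finset.sum_fiberwise (Finset.univ.filter fun ω => X ω = x) Y p

lemma sum_joint_fst (p : Ω → ℝ) (X : Ω → α) (Y : Ω → β) (y : β) :
    ∑ x, rvDist p (jointRV X Y) (x, y) = rvDist p Y y := by
  have : ∀ x, rvDist p (jointRV X Y) (x, y) =
      ∑ ω ∈ (Finset.univ.filter (fun ω => Y ω = y)).filter (fun ω => X ω = x), p ω := by
    intro x
    rw [rvDist_joint_eq]
    congr 1
    rw [Finset.filter_filter, Finset.filter_filter]
    exact Finset.filter_congr fun ω _ => by tauto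
  simp_rw [this]
  unfold rvDist
  exact Finset.sum_fiberwise (Finset.univ.filter fun ω => Y ω = y) X p

lemma joint_le_fst (p : Ω → ℝ) (hp : ∀ ω, 0 ≤ p ω) (X : Ω → α) (Y : Ω → β) (x : α) (y : β) :
    rvDist p (jointRV X Y) (x, y) ≤ rvDist p X x := by
  rw [← sum_joint_snd p X Y x]
  exact Finset.single_le_sum (f := fun y => rvDist p (jointRV X Y) (x, y))
    (fun y _ => rvDist_nonneg p hp _ _) (Finset.mem_univ y)

lemma joint_le_snd (p : Ω → ℝ) (hp : ∀ ω, 0 ≤ p ω) (X : Ω → α) (Y : Ω → β) (x : α) (y : β) :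
    rvDist p (jointRV X Y) (x, y) ≤ rvDist p Y y := by
  rw [← sum_joint_fst p X Y y]
  exact Finset.single_le_sum (f := fun x => rvDist p (jointRV X Y) (x, y))
    (fun x _ => rvDist_nonneg p hp _ _) (Finset.mem_univ x)

lemma log_split (a b c : ℝ) (ha : 0 ≤ a) (hab : a ≤ b) (hac : a ≤ c) :
    a * Real.log (a / (b * c)) = a * Real.log (a / b) - a * Real.log c := by
  rcases eq_or_lt_of_le ha with h | h
  · simp [← h]
  · have hb : 0 < b := lt_of_lt_of_le h hab
    have hc : 0 < c := lt_of_lt_of_le h hac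
    rw [← div_div, Real.log_div (by positivity) (by positivity), mul_sub]

/-- `I[X;Y] = H[Y] - H[Y|X]`. -/
lemma mutualInfo_eq (p : Ω → ℝ) (hp : ∀ ω, 0 ≤ p ω) (X : Ω → α) (Y : Ω → β) :
    mutualInfo p X Y = entropy p Y - condEntropy p X Y := by
  unfold mutualInfo condEntropy entropy
  have key : ∀ x y, rvDist p (jointRV X Y) (x, y) *
      Real.log (rvDist p (jointRV X Y) (x, y) / (rvDist p X x * rvDist p Y y)) =
      rvDist p (jointRV X Y) (x, y) *
        Real.log (rvDist p (jointRV X Y) (x, y) / rvDist p X x) -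
      rvDist p (jointRV X Y) (x, y) * Real.log (rvDist p Y y) := fun x y =>
    log_split _ _ _ (rvDist_nonneg p hp _ _) (joint_le_fst p hp X Y x y)
      (joint_le_snd p hp X Y x y)
  simp_rw [key, Finset.sum_sub_distrib]
  have : ∑ x, ∑ y, rvDist p (jointRV X Y) (x, y) * Real.log (rvDist p Y y)
      = ∑ y, rvDist p Y y * Real.log (rvDist p Y y) := by
    rw [Finset.sum_comm]
    refine Finset.sum_congr rfl fun y _ => ?_
    rw [← Finset.sum_mul, sum_joint_fst]
  rw [this]
  simp [Real.negMulLog, Finset.sum_neg_distrib]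
  ring

lemma condEntropy_nonneg (p : Ω → ℝ) (hp : ∀ ω, 0 ≤ p ω) (X : Ω → α) (Y : Ω → β) :
    0 ≤ condEntropy p X Y := by
  unfold condEntropy
  rw [neg_nonneg]
  refine Finset.sum_nonpos fun x _ => Finset.sum_nonpos fun y _ => ?_
  set a := rvDist p (jointRV X Y) (x, y) with ha
  have ha0 : 0 ≤ a := rvDist_nonneg p hp _ _
  rcases eq_or_lt_of_le ha0 with h | h
  · simp [← h]
  · have hb : a ≤ rvDist p X x := joint_le_fst p hp X Y x y
    have : a / rvDist p X x ≤ 1 := (div_le_one (lt_of_lt_of_le h hb)).mpr hb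
    exact mul_nonpos_of_nonneg_of_nonpos ha0 (Real.log_nonpos
      (div_nonneg ha0 (le_of_lt (lt_of_lt_of_le h hb))) this)

lemma joint_comp_eq (p : Ω → ℝ) (X : Ω → α) (Y : Ω → β) (f : β → γ) (x : α) (z : γ) :
    rvDist p (jointRV X (fun ω => f (Y ω))) (x, z) =
      ∑ y ∈ Finset.univ.filter (fun y => f y = z), rvDist p (jointRV X Y) (x, y) := by
  simp_rw [rvDist_joint_eq]
  rw [Finset.sum_fiberwise_eq_sum_filter]
  congr 1
  refine Finset.filter_congr fun ω _ => by simp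

/-- `H[f(Y) | X] ≤ H[Y | X]`. -/
lemma condEntropy_comp_le (p : Ω → ℝ) (hp : ∀ ω, 0 ≤ p ω) (X : Ω → α) (Y : Ω → β)
    (f : β → γ) : condEntropy p X (fun ω => f (Y ω)) ≤ condEntropy p X Y := by
  unfold condEntropy
  rw [neg_le_neg_iff]
  refine Finset.sum_le_sum fun x _ => ?_
  have regroup : ∑ z, rvDist p (jointRV X (fun ω => f (Y ω))) (x, z) *
      Real.log (rvDist p (jointRV X (fun ω => f (Y ω))) (x, z) / rvDist p X x) =
      ∑ y, rvDist p (jointRV X Y) (x, y) *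
        Real.log (rvDist p (jointRV X (fun ω => f (Y ω))) (x, f y) / rvDist p X x) := by
    rw [← Finset.sum_fiberwise Finset.univ f]
    refine Finset.sum_congr rfl fun z _ => ?_
    set L := Real.log (rvDist p (jointRV X fun ω => f (Y ω)) (x, z) / rvDist p X x) with hL
    rw [joint_comp_eq, Finset.sum_mul]
    refine Finset.sum_congr rfl fun y hy => ?_
    rw [(Finset.mem_filter.mp hy).2, ← hL]
  rw [regroup]
  refine Finset.sum_le_sum fun y _ => ?_
  set a := rvDist p (jointRV X Y) (x, y) with hadef
  have ha0 : 0 ≤ a := rvDist_nonneg p hp _ _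
  rcases eq_or_lt_of_le ha0 with h | h
  · simp [← h]
  · have hle : a ≤ rvDist p (jointRV X (fun ω => f (Y ω))) (x, f y) := by
      rw [joint_comp_eq]
      exact Finset.single_le_sum (f := fun y => rvDist p (jointRV X Y) (x, y))
        (fun y _ => rvDist_nonneg p hp _ _)
        (Finset.mem_filter.mpr ⟨Finset.mem_univ y, rfl⟩)
    have hb : a ≤ rvDist p X x := joint_le_fst p hp X Y x y
    have hbpos : 0 < rvDist p X x := lt_of_lt_of_le h hb
    have : Real.log (a / rvDist p X x) ≤
        Real.log (rvDist p (jointRV X (fun ω => f (Y ω))) (x, f y) / rvDist p X x) := by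
      apply Real.log_le_log (by positivity)
      gcongr
    nlinarith

end Helpers

/-- under the hypotheses of the main lemma,
`I[Wᵢ; x̃] ≤ (1 - ρ)·H[W]`. -/
theorem mutualInfo_token_filtered_le {α β δ τ : Type*} [Fintype α] [DecidableEq α]
    [Fintype β] [DecidableEq β] [Fintype δ] [DecidableEq δ]
    [Fintype τ] [DecidableEq τ]
    (p : Ω → ℝ) (hp : IsProbMass p)
    (W : Ω → α) (wi : α → β) (g : α → τ) (et : α → δ)
    (hW : 0 < entropy p W)
    (ρ : ℝ) (hρ : ρ = mutualInfo p (fun ω => g (W ω)) W / entropy p W)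
    (hzero : mutualInfo p (fun ω => g (W ω)) (fun ω => et (W ω)) = 0) :
    mutualInfo p (fun ω => wi (W ω)) (fun ω => et (W ω)) ≤ (1 - ρ) * entropy p W := by
  obtain ⟨hp0, hp1⟩ := hp
  have h1 := mutualInfo_eq p hp0 (fun ω => wi (W ω)) (fun ω => et (W ω))
  have h2 := mutualInfo_eq p hp0 (fun ω => g (W ω)) (fun ω => et (W ω))
  have h3 := condEntropy_comp_le p hp0 (fun ω => g (W ω)) W et
  have h4 := mutualInfo_eq p hp0 (fun ω => g (W ω)) W
  have h5 : mutualInfo p (fun ω => g (W ω)) W = ρ * entropy p W := by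
    rw [hρ]; field_simp
  have h6 := condEntropy_nonneg p hp0 (fun ω => wi (W ω)) (fun ω => et (W ω))
  rw [hzero] at h2
  linarith
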